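/- arXiv:2103.07835 — 5 statements merged into one kernel-verified Lean document; each statement's English description precedes it below -/
import Mathlib

section
/- The Vandermonde matrix factors as 𝕍(T) = 𝔼(T)·ℍ(T), where 𝕍(T) = (T_i^{j−1})_{i,j=1}^r, 𝔼(T) = (e_{j−1}(T̂_i))_{i,j=1}^r, and ℍ(T) = ((−1)^{i−1} h_{j−i}(T))_{i,j=1}^r (with h_k = 0 for k < 0). -/
/-!
In `R⟦X⟧` the series `∑ₙ aⁿ Xⁿ` inverts `1 - a X`, and the coefficients of `∏ₗ (1 - Tₗ X)` and
`∏ₗ (1 - Tₗ X)⁻¹` are `(-1)ᵏ eₖ` and `hₘ`. Hence the identity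
`∏_{l ≠ i} (1 - Tₗ X) · ∏ₗ (1 - Tₗ X)⁻¹ = (1 - Tᵢ X)⁻¹`, read off at `Xʲ`, is the `(i, j)` entry
of `𝕍(T) = 𝔼(T) ℍ(T)`.
-/

open scoped BigOperators

/-- The complete homogeneous symmetric polynomial `h_m(T_1,…,T_r)`. -/
noncomputable def hsymm {R : Type*} [CommRing R] (r : ℕ) (T : Fin r → R) (m : ℕ) : R :=
  ∑ c ∈ Finset.Nat.antidiagonalTuple r m, ∏ i, T i ^ c i

open Finset PowerSeries

section

variable {R : Type*} [CommRing R]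

namespace PowerSeries

theorem mk_pow_mul_one_sub_C_mul_X (a : R) : mk (a ^ ·) * (1 - C a * X) = 1 := by
  simpa [rescale_mk, rescale_X, mul_comm (X : R⟦X⟧)] using
    congrArg (rescale a) (mk_one_mul_one_sub_eq_one R)

theorem coeff_prod_one_sub_C_mul_X {ι : Type*} (s : Finset ι) (T : ι → R) (k : ℕ) :
    coeff k (∏ l ∈ s, (1 - C (T l) * X)) = (-1) ^ k * ∑ t ∈ s.powersetCard k, ∏ l ∈ t, T l := by
  classical
  have hprod (t : Finset ι) :
      ∏ l ∈ t, -(C (T l) * X) = C ((-1) ^ #t * ∏ l ∈ t, T l) * X ^ #t := by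
    simp only [prod_neg, prod_mul_distrib, prod_const, map_mul, map_pow, map_neg, map_one,
      map_prod]
    ring
  simp_rw [sub_eq_add_neg, prod_one_add, hprod, map_sum, coeff_C_mul_X_pow]
  rw [← sum_filter, powersetCard_eq_filter, mul_sum]
  refine sum_congr (filter_congr fun t _ => eq_comm) fun t ht => ?_
  rw [(mem_filter.1 ht).2]

theorem coeff_prod_mk_pow {r : ℕ} (T : Fin r → R) (m : ℕ) :
    coeff m (∏ l, mk (T l ^ ·)) = hsymm r T m := by
  classical
  rw [coeff_prod, hsymm]
  refine sum_equiv Finsupp.equivFunOnFinite ?_ ?_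
  · simp [Finset.Nat.mem_antidiagonalTuple]
  · simp

end PowerSeries

theorem sum_neg_one_pow_mul_esymm_erase_mul_hsymm {r : ℕ} (T : Fin r → R) (i : Fin r) (m : ℕ) :
    ∑ k ∈ range (m + 1),
        (-1) ^ k * (∑ s ∈ powersetCard k (univ.erase i), ∏ l ∈ s, T l) * hsymm r T (m - k) =
      T i ^ m := by
  have hinv : (∏ l ∈ univ.erase i, (1 - C (T l) * X)) * ∏ l ∈ univ.erase i, mk (T l ^ ·) = 1 := by
    rw [← prod_mul_distrib]
    exact prod_eq_one fun l _ => by rw [mul_comm, mk_pow_mul_one_sub_C_mul_X]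
  have hseries :
      (∏ l ∈ univ.erase i, (1 - C (T l) * X)) * ∏ l, mk (T l ^ ·) = mk (T i ^ ·) := by
    rw [← mul_prod_erase univ _ (mem_univ i), mul_left_comm, hinv, mul_one]
  have hcoeff := congrArg (coeff m) hseries
  rw [coeff_mul, Nat.sum_antidiagonal_eq_sum_range_succ (fun a b => coeff a _ * coeff b _)]
    at hcoeff
  simpa only [coeff_prod_one_sub_C_mul_X, coeff_prod_mk_pow, coeff_mk] using hcoeff

end

theorem stmt2 {R : Type*} [CommRing R] (r : ℕ) (T : Fin r → R) :
    Matrix.of (fun i j : Fin r => T i ^ (j : ℕ)) =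
      Matrix.of (fun i j : Fin r =>
        ∑ s ∈ Finset.powersetCard (j : ℕ) (Finset.univ.erase i), ∏ l ∈ s, T l) *
      Matrix.of (fun i j : Fin r =>
        if (i : ℕ) ≤ (j : ℕ) then
          (-1 : R) ^ (i : ℕ) * hsymm r T ((j : ℕ) - (i : ℕ))
        else 0) := by
  ext i j
  simp only [Matrix.mul_apply, Matrix.of_apply, mul_ite, mul_zero]
  rw [← sum_neg_one_pow_mul_esymm_erase_mul_hsymm T i j,
    Fin.sum_univ_eq_sum_range (fun k => if k ≤ (j : ℕ) then
      (∑ s ∈ powersetCard k (univ.erase i), ∏ l ∈ s, T l) * ((-1) ^ k * hsymm r T (j - k))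
      else 0), ← sum_filter]
  have hrange : {k ∈ range r | k ≤ (j : ℕ)} = range (j + 1) := by
    ext k
    simp only [mem_filter, mem_range]
    omega
  rw [hrange]
  exact sum_congr rfl fun k _ => by ring
end

section
/- Let F be a field, n ≥ 1, and let U(F) be the group of n×n upper-triangular unipotent matrices over F. Let R ⊆ {(i,j) : 1 ≤ i < j ≤ n} be any subset with complement R′, and set U_R(F) = {u ∈ U(F) : u_{ij} = 0 for all (i,j) ∉ R (with i<j)}, and similarly U_{R′}(F). Then the multiplication map (x,y) ↦ xy is a bijection from U_R(F) × U_{R′}(F) onto U(F). -/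
open scoped BigOperators
open Finset

section Aux
variable {F : Type*} [Field F] {n : ℕ}

private lemma icc_decomp {i j : Fin n} (hij : i < j) :
    Finset.Icc i j = insert i (insert j (Finset.Ioo i j)) := by
  ext k
  simp only [Finset.mem_Icc, Finset.mem_insert, Finset.mem_Ioo]
  constructor
  · rintro ⟨h1, h2⟩
    rcases eq_or_lt_of_le h1 with h | h
    · exact Or.inl h.symm
    rcases eq_or_lt_of_le h2 with h' | h'
    · exact Or.inr (Or.inl h')
    · exact Or.inr (Or.inr ⟨h, h'⟩)
  · rintro (rfl | rfl | ⟨h1, h2⟩)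
    · exact ⟨le_refl _, le_of_lt hij⟩
    · exact ⟨le_of_lt hij, le_refl _⟩
    · exact ⟨le_of_lt h1, le_of_lt h2⟩

private lemma mul_split (x y : Matrix (Fin n) (Fin n) F)
    (hx : ∀ i k : Fin n, k < i → x i k = 0) (hy : ∀ k j : Fin n, j < k → y k j = 0)
    (hxd : ∀ i, x i i = 1) (hyd : ∀ i, y i i = 1)
    {i j : Fin n} (hij : i < j) :
    (x * y) i j = x i j + y i j + ∑ k ∈ Finset.Ioo i j, x i k * y k j := by
  rw [Matrix.mul_apply]
  rw [← Finset.sum_subset (Finset.subset_univ (Finset.Icc i j))]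
  · rw [icc_decomp hij, Finset.sum_insert, Finset.sum_insert]
    · rw [hxd, hyd]; ring
    · simp only [Finset.mem_Ioo]; exact fun h => lt_irrefl _ h.2
    · simp only [Finset.mem_insert, Finset.mem_Ioo]
      rintro (rfl | ⟨h1, _⟩)
      · exact lt_irrefl _ hij
      · exact lt_irrefl _ h1
  · intro k _ hk
    simp only [Finset.mem_Icc, not_and_or, not_le] at hk
    rcases hk with h | h
    · rw [hx _ _ h, zero_mul]
    · rw [hy _ _ h, mul_zero]

private lemma mul_diag (x y : Matrix (Fin n) (Fin n) F)
    (hx : ∀ i k : Fin n, k < i → x i k = 0) (hy : ∀ k j : Fin n, j < k → y k j = 0)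
    (hxd : ∀ i, x i i = 1) (hyd : ∀ i, y i i = 1) (i : Fin n) :
    (x * y) i i = 1 := by
  rw [Matrix.mul_apply, Finset.sum_eq_single i]
  · rw [hxd, hyd, one_mul]
  · intro k _ hk
    rcases lt_or_gt_of_ne hk with h | h
    · rw [hx _ _ h, zero_mul]
    · rw [hy _ _ h, mul_zero]
  · intro h; exact absurd (Finset.mem_univ i) h

private lemma mul_lower (x y : Matrix (Fin n) (Fin n) F)
    (hx : ∀ i k : Fin n, k < i → x i k = 0) (hy : ∀ k j : Fin n, j < k → y k j = 0)
    {i j : Fin n} (hij : j < i) :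
    (x * y) i j = 0 := by
  rw [Matrix.mul_apply]
  apply Finset.sum_eq_zero
  intro k _
  rcases lt_or_ge k i with h | h
  · rw [hx _ _ h, zero_mul]
  · rw [hy _ _ (lt_of_lt_of_le hij h), mul_zero]

open scoped Classical in
noncomputable def xyF (R : Set (Fin n × Fin n)) (u : Matrix (Fin n) (Fin n) F) :
    Fin n → Fin n → F × F := fun i j =>
  if i = j then (1, 1)
  else if hlt : i < j then
    let c := u i j - ∑ k ∈ (Finset.Ioo i j).attach, (xyF R u i k.1).1 * (xyF R u k.1 j).2
    if (i, j) ∈ R then (c, 0) else (0, c)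
  else (0, 0)
termination_by i j => (j : ℕ) - (i : ℕ)
decreasing_by
  all_goals
    have hm := Finset.mem_Ioo.mp k.2
    have h1 : (_ : ℕ) < (k.1 : ℕ) := hm.1
    have h2 : ((k.1 : ℕ) : ℕ) < _ := hm.2
    omega


variable {R : Set (Fin n × Fin n)} {u : Matrix (Fin n) (Fin n) F}

private lemma xyF_diag (i : Fin n) : xyF R u i i = (1, 1) := by
  rw [xyF]; simp

private lemma xyF_lower {i j : Fin n} (h : j < i) : xyF R u i j = (0, 0) := by
  rw [xyF]; simp [Fin.ne_of_gt h, not_lt_of_gt h]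

private lemma xyF_fst_lower {i j : Fin n} (h : j < i) : (xyF R u i j).1 = 0 := by
  rw [xyF_lower h]

private lemma xyF_snd_lower {i j : Fin n} (h : j < i) : (xyF R u i j).2 = 0 := by
  rw [xyF_lower h]

private lemma xyF_fst_notR {i j : Fin n} (h : i < j) (hR : (i, j) ∉ R) :
    (xyF R u i j).1 = 0 := by
  rw [xyF]
  simp only [Fin.ne_of_lt h, if_false, dif_pos h]
  rw [if_neg hR]

private lemma xyF_snd_R {i j : Fin n} (h : i < j) (hR : (i, j) ∈ R) :
    (xyF R u i j).2 = 0 := by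
  rw [xyF]
  simp only [Fin.ne_of_lt h, if_false, dif_pos h]
  rw [if_pos hR]

private lemma xyF_add {i j : Fin n} (h : i < j) :
    (xyF R u i j).1 + (xyF R u i j).2 =
      u i j - ∑ k ∈ Finset.Ioo i j, (xyF R u i k).1 * (xyF R u k j).2 := by
  rw [xyF]
  simp only [Fin.ne_of_lt h, if_false, dif_pos h]
  rw [← Finset.sum_attach (Finset.Ioo i j) (fun k => (xyF R u i k).1 * (xyF R u k j).2)]
  split <;> simp

end Aux

theorem stmt10 (F : Type*) [Field F] (n : ℕ) (R : Set (Fin n × Fin n)) :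
    Set.BijOn
      (fun p : Matrix (Fin n) (Fin n) F × Matrix (Fin n) (Fin n) F => p.1 * p.2)
      (({u : Matrix (Fin n) (Fin n) F |
          (∀ i, u i i = 1) ∧ (∀ i j : Fin n, j < i → u i j = 0) ∧
          (∀ i j : Fin n, i < j → (i, j) ∉ R → u i j = 0)}) ×ˢ
       ({u : Matrix (Fin n) (Fin n) F |
          (∀ i, u i i = 1) ∧ (∀ i j : Fin n, j < i → u i j = 0) ∧
          (∀ i j : Fin n, i < j → (i, j) ∈ R → u i j = 0)}))
      {u : Matrix (Fin n) (Fin n) F |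
        (∀ i, u i i = 1) ∧ (∀ i j : Fin n, j < i → u i j = 0)} := by
  classical
  refine ⟨?_, ?_, ?_⟩
  · -- MapsTo
    rintro ⟨x, y⟩ ⟨⟨hxd, hxl, -⟩, ⟨hyd, hyl, -⟩⟩
    exact ⟨fun i => mul_diag x y hxl hyl hxd hyd i, fun i j h => mul_lower x y hxl hyl h⟩
  · -- InjOn
    rintro ⟨x, y⟩ ⟨⟨hxd, hxl, hxR⟩, hyd, hyl, hyR⟩ ⟨x', y'⟩
      ⟨⟨hxd', hxl', hxR'⟩, hyd', hyl', hyR'⟩ heq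
    simp only at heq
    have key : ∀ d : ℕ, ∀ i j : Fin n, (j : ℕ) - (i : ℕ) = d →
        x i j = x' i j ∧ y i j = y' i j := by
      intro d
      induction d using Nat.strong_induction_on with
      | _ d ih =>
        intro i j hd
        rcases lt_trichotomy i j with hij | rfl | hij
        · have hijn := Fin.lt_def.mp hij
          have hsum : ∀ k ∈ Finset.Ioo i j, x i k * y k j = x' i k * y' k j := by
            intro k hk
            rw [Finset.mem_Ioo] at hk
            have hk1 := Fin.lt_def.mp hk.1
            have hk2 := Fin.lt_def.mp hk.2
            have h1 : (k : ℕ) - (i : ℕ) < d := by omega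
            have h2 : (j : ℕ) - (k : ℕ) < d := by omega
            obtain ⟨e1, -⟩ := ih _ h1 i k rfl
            obtain ⟨-, f2⟩ := ih _ h2 k j rfl
            rw [e1, f2]
          have h1 := mul_split x y hxl hyl hxd hyd hij
          have h2 := mul_split x' y' hxl' hyl' hxd' hyd' hij
          rw [heq] at h1
          rw [Finset.sum_congr rfl hsum] at h1
          have hxy : x i j + y i j = x' i j + y' i j := by
            have h3 := h1.symm.trans h2
            linear_combination h3
          by_cases hR : (i, j) ∈ R
          · have e1 : y i j = 0 := hyR _ _ hij hR
            have e2 : y' i j = 0 := hyR' _ _ hij hR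
            refine ⟨?_, e1.trans e2.symm⟩
            rw [e1, e2] at hxy; simpa using hxy
          · have e1 : x i j = 0 := hxR _ _ hij hR
            have e2 : x' i j = 0 := hxR' _ _ hij hR
            refine ⟨e1.trans e2.symm, ?_⟩
            rw [e1, e2] at hxy; simpa using hxy
        · exact ⟨(hxd i).trans (hxd' i).symm, (hyd i).trans (hyd' i).symm⟩
        · exact ⟨(hxl _ _ hij).trans (hxl' _ _ hij).symm,
            (hyl _ _ hij).trans (hyl' _ _ hij).symm⟩
    have hx : x = x' := by ext i j; exact (key _ i j rfl).1
    have hy : y = y' := by ext i j; exact (key _ i j rfl).2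
    simp [hx, hy]
  · -- SurjOn
    intro u hu
    obtain ⟨hud, hul⟩ := hu
    set X : Matrix (Fin n) (Fin n) F := Matrix.of fun i j => (xyF R u i j).1 with hX
    set Y : Matrix (Fin n) (Fin n) F := Matrix.of fun i j => (xyF R u i j).2 with hY
    have hXd : ∀ i, X i i = 1 := fun i => by simp [hX, xyF_diag]
    have hXl : ∀ i k : Fin n, k < i → X i k = 0 := fun i k h => xyF_fst_lower h
    have hYd : ∀ i, Y i i = 1 := fun i => by simp [hY, xyF_diag]
    have hYl : ∀ k j : Fin n, j < k → Y k j = 0 := fun k j h => xyF_snd_lower h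
    refine ⟨(X, Y), ⟨⟨hXd, hXl, fun i j h hR => xyF_fst_notR h hR⟩,
      hYd, hYl, fun i j h hR => xyF_snd_R h hR⟩, ?_⟩
    ext i j
    simp only
    rcases lt_trichotomy i j with hij | rfl | hij
    · rw [mul_split X Y hXl hYl hXd hYd hij]
      have h4 := xyF_add (R := R) (u := u) hij
      have hXij : X i j = (xyF R u i j).1 := rfl
      have hYij : Y i j = (xyF R u i j).2 := rfl
      have hS : ∑ k ∈ Finset.Ioo i j, X i k * Y k j
          = ∑ k ∈ Finset.Ioo i j, (xyF R u i k).1 * (xyF R u k j).2 := rfl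
      rw [hXij, hYij, hS]
      linear_combination h4
    · rw [mul_diag X Y hXl hYl hXd hYd, hud]
    · rw [mul_lower X Y hXl hYl hij, hul _ _ hij]
end

section
/- Let F = ℚ (or any field), n ≥ 3, G = GL_n(F), Z the center, B_0 the upper-triangular Borel subgroup of GL_{n−1}(F) embedded in G via h ↦ diag(h,1), U the upper-triangular unipotent subgroup of G, and for y ∈ F^{n−1} let n(y) be the unipotent matrix with upper-right column y. Identify S_n with permutation matrices in G. For w ∈ S_n let I_w⁰ = {i ∈ {1,…,n−1} : w^{−1}(i) > w^{−1}(n)}, and let Y(w) be the set of y ∈ F^{n−1} such that the support sp(y) = {i : y_i ≠ 0} is contained in I_w⁰ and w^{−1} is strictly decreasing on sp(y). Then G is the disjoint union over w ∈ S_n and y ∈ Y(w) of the double cosets Z·ι(B_0)·n(y)·w·U. -/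
/-!
Existence. Column elimination (adding a multiple of an earlier column to a later one, i.e.
multiplying by `U` on the right) makes the lowest nonzero entries of the columns lie in
distinct rows, which gives the Bruhat factorisation `g = t w u` with `t` upper triangular.
Pulling out `t`'s corner entry as the central factor, `t = z ι(b) n(y)`. An inadmissible
coordinate `y i ≠ 0` is then removed: if `w⁻¹(i) < w⁻¹(n)`, the transvection
`n(y i e_i)` commutes past `w` into `U`; if `y j ≠ 0` for some `j > i` with
`w⁻¹(i) < w⁻¹(j)`, conjugation by `ι(1 + (y i / y j) E_ij)` kills `y i`, and the inverse
conjugator again commutes past `w` into `U`.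
Induction on the support of `y` ends at an admissible `y`.

Uniqueness. Two decompositions give `τ w = w' v` with `v ∈ U` and `τ = ζ ι(B) n(c)` upper
triangular. The diagonal of `v` forces `w' a ≤ w a` for all `a`, so `w = w'`; then `ζ = 1`,
`B` is unipotent and `τ` vanishes at `(i, j)` whenever `w⁻¹ j < w⁻¹ i`. At the largest `i`
with `y i ≠ y' i` admissibility gives `c i = 0`, i.e. `(B y) i = y' i`, which needs some
`l > i` with `B i l y l ≠ 0`; admissibility of the pair `(i, l)` rules that out.
-/

open Matrix Equiv

namespace MirabolicBruhat

section Unitriangular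

variable {ι R : Type*} [LinearOrder ι] [CommRing R]

def IsUnitriangular (u : Matrix ι ι R) : Prop :=
  u.IsUpperTriangular ∧ ∀ i, u i i = 1

theorem _root_.Matrix.IsUpperTriangular.mul_apply_self [Fintype ι] {M N : Matrix ι ι R}
    (hM : M.IsUpperTriangular) (hN : N.IsUpperTriangular) (i : ι) :
    (M * N) i i = M i i * N i i := by
  rw [Matrix.mul_apply]
  refine Finset.sum_eq_single i (fun l _ hl => ?_) (by simp)
  rcases hl.lt_or_gt with h | h
  · rw [hM h, zero_mul]
  · rw [hN h, mul_zero]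

theorem _root_.Matrix.IsUpperTriangular.isUnit_det [Fintype ι] {M : Matrix ι ι R}
    (hM : M.IsUpperTriangular) (hd : ∀ i, IsUnit (M i i)) : IsUnit M.det := by
  rw [det_of_isUpperTriangular hM]
  exact IsUnit.prod_univ_iff.mpr hd

theorem isUnitriangular_one : IsUnitriangular (1 : Matrix ι ι R) :=
  ⟨blockTriangular_one, fun _ => one_apply_eq _⟩

theorem IsUnitriangular.mul [Fintype ι] {u v : Matrix ι ι R} (hu : IsUnitriangular u)
    (hv : IsUnitriangular v) : IsUnitriangular (u * v) :=
  ⟨hu.1.mul hv.1, fun i => by rw [hu.1.mul_apply_self hv.1, hu.2, hv.2, one_mul]⟩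

theorem IsUnitriangular.isUnit_det [Fintype ι] {u : Matrix ι ι R} (hu : IsUnitriangular u) :
    IsUnit u.det :=
  hu.1.isUnit_det fun i => by simp [hu.2 i]

theorem IsUnitriangular.mul_inv [Fintype ι] {u : Matrix ι ι R} (hu : IsUnitriangular u) :
    u * u⁻¹ = 1 :=
  mul_nonsing_inv u hu.isUnit_det

theorem IsUnitriangular.inv [Fintype ι] {u : Matrix ι ι R} (hu : IsUnitriangular u) :
    IsUnitriangular u⁻¹ := by
  have := u.invertibleOfIsUnitDet hu.isUnit_det
  have hinv : u⁻¹.IsUpperTriangular := blockTriangular_inv_of_blockTriangular hu.1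
  refine ⟨hinv, fun i => ?_⟩
  have h := congr_fun₂ (nonsing_inv_mul u hu.isUnit_det) i i
  rwa [hinv.mul_apply_self hu.1, hu.2, mul_one, one_apply_eq] at h

theorem isUnitriangular_transvection [Fintype ι] {i j : ι} (h : i < j) (c : R) :
    IsUnitriangular (transvection i j c) :=
  ⟨blockTriangular_transvection h.le c, fun l => by
    simpa [transvection, single_apply] using
      fun (hi : i = l) (hj : j = l) => absurd (hi.trans hj.symm) h.ne⟩

end Unitriangular

section Permutation

/- `w⁻¹.permMatrix R` sends `e j` to `e (w j)`; it is the paper's matrix of `w`. -/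

variable {R : Type*} [CommRing R] {n : ℕ}

theorem mul_permMatrix_inv (A : Matrix (Fin n) (Fin n) R) (w : Perm (Fin n)) :
    A * w⁻¹.permMatrix R = A.submatrix id w :=
  PEquiv.mul_toMatrix_toPEquiv A w.symm

theorem permMatrix_inv_mul (w : Perm (Fin n)) (A : Matrix (Fin n) (Fin n) R) :
    w⁻¹.permMatrix R * A = A.submatrix w.symm id :=
  PEquiv.toMatrix_toPEquiv_mul w.symm A

theorem transvection_mul_permMatrix_inv (w : Perm (Fin n)) (a b : Fin n) (c : R) :
    transvection a b c * w⁻¹.permMatrix R =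
      w⁻¹.permMatrix R * transvection (w.symm a) (w.symm b) c := by
  ext i j
  simp only [mul_permMatrix_inv, permMatrix_inv_mul, submatrix_apply, id, transvection,
    Matrix.add_apply, one_apply, single_apply, w.symm.injective.eq_iff, Equiv.symm_apply_eq]

theorem submatrix_eq_of_mul_permMatrix_inv_eq {t v : Matrix (Fin n) (Fin n) R}
    {w w' : Perm (Fin n)} (h : t * w⁻¹.permMatrix R = w'⁻¹.permMatrix R * v) :
    t.submatrix w' w = v := by
  ext a c
  simpa [mul_permMatrix_inv, permMatrix_inv_mul] using congr_fun₂ h (w' a) c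

theorem perm_eq_of_forall_apply_le {σ τ : Perm (Fin n)} (h : ∀ a, σ a ≤ τ a) : σ = τ := by
  by_contra hne
  obtain ⟨a, ha⟩ := not_forall.mp (mt Equiv.ext hne)
  have hlt : ∑ a, (σ a : ℕ) < ∑ a, (τ a : ℕ) :=
    Finset.sum_lt_sum (fun a _ => h a) ⟨a, Finset.mem_univ a, (h a).lt_of_ne ha⟩
  rw [Equiv.sum_comp σ ((↑) : Fin n → ℕ), Equiv.sum_comp τ ((↑) : Fin n → ℕ)] at hlt
  exact hlt.false

theorem perm_eq_of_isUnitriangular_submatrix [Nontrivial R] {t : Matrix (Fin n) (Fin n) R}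
    (ht : t.IsUpperTriangular) {w w' : Perm (Fin n)}
    (hv : IsUnitriangular (t.submatrix w' w)) : w' = w :=
  perm_eq_of_forall_apply_le fun a => not_lt.mp fun h => by
    simpa [ht h] using hv.2 a

end Permutation

section Affine

variable {R : Type*} [CommRing R] {k : ℕ}

theorem matrix_ext_castSucc_last {α : Type*} {M N : Matrix (Fin (k + 1)) (Fin (k + 1)) α}
    (h₁ : ∀ i j : Fin k, M i.castSucc j.castSucc = N i.castSucc j.castSucc)
    (h₂ : ∀ i : Fin k, M i.castSucc (Fin.last k) = N i.castSucc (Fin.last k))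
    (h₃ : ∀ j : Fin k, M (Fin.last k) j.castSucc = N (Fin.last k) j.castSucc)
    (h₄ : M (Fin.last k) (Fin.last k) = N (Fin.last k) (Fin.last k)) : M = N := by
  ext i j
  induction i using Fin.lastCases <;> induction j using Fin.lastCases <;> simp only [*]

/-- The block matrix `[[A, v], [0, 1]]`: the paper's `ι(b)` is `affine b 0`, its `n(y)` is
`affine 1 y`. -/
def affine (A : Matrix (Fin k) (Fin k) R) (v : Fin k → R) :
    Matrix (Fin (k + 1)) (Fin (k + 1)) R :=
  reindex finSumFinEquiv finSumFinEquiv (fromBlocks A (replicateCol (Fin 1) v) 0 1)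

variable (A : Matrix (Fin k) (Fin k) R) (v : Fin k → R)

@[simp]
theorem affine_castSucc_castSucc (i j : Fin k) : affine A v i.castSucc j.castSucc = A i j := by
  simp [affine, finSumFinEquiv_symm_apply_castSucc]

@[simp]
theorem affine_castSucc_last (i : Fin k) : affine A v i.castSucc (Fin.last k) = v i := by
  simp [affine, finSumFinEquiv_symm_apply_castSucc, finSumFinEquiv_symm_last]

@[simp]
theorem affine_last_castSucc (j : Fin k) : affine A v (Fin.last k) j.castSucc = 0 := by
  simp [affine, finSumFinEquiv_symm_apply_castSucc, finSumFinEquiv_symm_last]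

@[simp]
theorem affine_last_last : affine A v (Fin.last k) (Fin.last k) = 1 := by
  simp [affine, finSumFinEquiv_symm_last]

theorem affine_mul_affine (B : Matrix (Fin k) (Fin k) R) (u : Fin k → R) :
    affine A v * affine B u = affine (A * B) (A *ᵥ u + v) := by
  simp only [affine, reindex_apply, submatrix_mul_equiv, fromBlocks_multiply]
  congr 2 <;> ext <;> simp [replicateCol, mul_apply, mulVec, dotProduct]

theorem affine_one_zero : affine (1 : Matrix (Fin k) (Fin k) R) 0 = 1 := by
  simp [affine]

theorem affine_mulVec (y : Fin k → R) : affine A (A *ᵥ y) = affine A 0 * affine 1 y := by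
  rw [affine_mul_affine, mul_one, add_zero]

theorem isUpperTriangular_affine (hA : A.IsUpperTriangular) :
    (affine A v).IsUpperTriangular := by
  intro i j hij
  induction i using Fin.lastCases with
  | last =>
    induction j using Fin.lastCases with
    | last => exact absurd hij (lt_irrefl _)
    | cast j => simp
  | cast i =>
    induction j using Fin.lastCases with
    | last => exact absurd hij (Fin.castSucc_lt_last i).not_gt
    | cast j => simpa using hA (Fin.castSucc_lt_castSucc_iff.mp hij)

theorem affine_transvection_zero (i j : Fin k) (c : R) :
    affine (transvection i j c) 0 = transvection i.castSucc j.castSucc c := by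
  refine matrix_ext_castSucc_last (fun a b => ?_) (fun a => ?_) (fun b => ?_) ?_ <;>
    simp [transvection, one_apply, single_apply, (Fin.castSucc_ne_last _).symm]

theorem affine_one_single (i : Fin k) (c : R) :
    affine 1 (Pi.single i c) = transvection i.castSucc (Fin.last k) c := by
  refine matrix_ext_castSucc_last (fun a b => ?_) (fun a => ?_) (fun b => ?_) ?_ <;>
    simp [transvection, one_apply, single_apply, Pi.single_apply, (Fin.castSucc_ne_last _).symm,
      eq_comm]

end Affine

section Admissible

variable {R : Type*} [CommRing R] {k : ℕ}

def IsAdmissible (w : Perm (Fin (k + 1))) (y : Fin k → R) : Prop :=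
  (∀ i, y i ≠ 0 → w.symm (Fin.last k) < w.symm i.castSucc) ∧
  (∀ i j, y i ≠ 0 → y j ≠ 0 → i < j → w.symm j.castSucc < w.symm i.castSucc)

theorem eq_of_isAdmissible {w : Perm (Fin (k + 1))} {y y' : Fin k → R} (hy : IsAdmissible w y)
    (hy' : IsAdmissible w y') {B : Matrix (Fin k) (Fin k) R} (hB : B.IsUpperTriangular)
    (hBd : ∀ i, B i i = 1) (hBw : ∀ i l, w.symm l.castSucc < w.symm i.castSucc → B i l = 0)
    (hc : ∀ i, w.symm (Fin.last k) < w.symm i.castSucc → (B *ᵥ y) i = y' i) : y = y' := by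
  classical
  by_contra hne
  obtain ⟨i, hi, hmax⟩ := Finset.exists_max_image ({i | y i ≠ y' i} : Finset (Fin k)) id
    (by simpa [Finset.Nonempty, funext_iff] using hne)
  simp only [Finset.mem_filter, Finset.mem_univ, true_and, id] at hi hmax
  have hagree : ∀ l, i < l → y l = y' l := fun l hl => by_contra fun h => (hmax l h).not_gt hl
  have hyi : y i ≠ 0 ∨ y' i ≠ 0 := by
    by_contra! h
    exact hi (h.1.trans h.2.symm)
  have hlast : w.symm (Fin.last k) < w.symm i.castSucc := hyi.elim (hy.1 i) (hy'.1 i)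
  have hlater : ∀ l, i < l → y l ≠ 0 → w.symm l.castSucc < w.symm i.castSucc :=
    fun l hl hyl =>
      hyi.elim (fun h => hy.2 i l h hyl hl) (fun h => hy'.2 i l h (hagree l hl ▸ hyl) hl)
  obtain ⟨l, hli, hBl⟩ : ∃ l, l ≠ i ∧ B i l * y l ≠ 0 := by
    by_contra! h
    apply hi
    rw [← hc i hlast, mulVec, dotProduct, Finset.sum_eq_single i (fun l _ hl => h l hl) (by simp),
      hBd, one_mul]
  have hil : i < l := hli.lt_or_gt.resolve_left fun h => left_ne_zero_of_mul hBl (hB h)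
  exact left_ne_zero_of_mul hBl (hBw i l (hlater l hil (right_ne_zero_of_mul hBl)))

end Admissible

section Bruhat

theorem exists_ne_zero_of_isUnit_det {ι R : Type*} [Fintype ι] [DecidableEq ι] [CommRing R]
    [Nontrivial R] {m : Matrix ι ι R} (hm : IsUnit m.det) (j : ι) : ∃ i, m i j ≠ 0 := by
  by_contra! h
  exact hm.ne_zero (det_eq_zero_of_column_eq_zero j h)

variable {F : Type*} [Field F] {n : ℕ}

open scoped Classical in
/-- The row of the lowest nonzero entry of column `j`, or `0` if the column vanishes. -/
noncomputable def lowestRow (m : Matrix (Fin n) (Fin n) F) (j : Fin n) : ℕ :=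
  ({i | m i j ≠ 0} : Finset (Fin n)).sup Fin.val

theorem le_lowestRow {m : Matrix (Fin n) (Fin n) F} {i j : Fin n} (h : m i j ≠ 0) :
    (i : ℕ) ≤ lowestRow m j :=
  Finset.le_sup (f := Fin.val) (by simpa using h)

theorem exists_eq_lowestRow {m : Matrix (Fin n) (Fin n) F} {j : Fin n} (h : ∃ i, m i j ≠ 0) :
    ∃ i, m i j ≠ 0 ∧ (i : ℕ) = lowestRow m j := by
  classical
  obtain ⟨i, hi, hs⟩ := Finset.exists_mem_eq_sup ({i | m i j ≠ 0} : Finset (Fin n))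
    (by simpa [Finset.Nonempty] using h) Fin.val
  exact ⟨i, by simpa using hi, by rw [lowestRow, hs]⟩

theorem lowestRow_mul_transvection_of_ne (m : Matrix (Fin n) (Fin n) F) {j j' q : Fin n}
    (hq : q ≠ j') (c : F) : lowestRow (m * transvection j j' c) q = lowestRow m q := by
  unfold lowestRow
  congr 2
  ext i
  rw [mul_transvection_apply_of_ne _ _ _ _ hq]

theorem exists_eq_upper_mul_permMatrix {m : Matrix (Fin n) (Fin n) F} (hm : IsUnit m.det)
    (hinj : Function.Injective (lowestRow m)) :
    ∃ (t : Matrix (Fin n) (Fin n) F) (w : Perm (Fin n)),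
      t.IsUpperTriangular ∧ (∀ i, t i i ≠ 0) ∧ m = t * w⁻¹.permMatrix F := by
  choose p hp hpl using fun j => exists_eq_lowestRow (exists_ne_zero_of_isUnit_det hm j)
  have hpinj : Function.Injective p := fun a b hab => hinj (by rw [← hpl a, ← hpl b, hab])
  let w := Equiv.ofBijective p (Finite.injective_iff_bijective.mp hpinj)
  have hw : ∀ l, p (w.symm l) = l := w.apply_symm_apply
  refine ⟨m.submatrix id w.symm, w, fun i l hli => ?_,
    fun l => by simpa [hw] using hp (w.symm l), ?_⟩
  · by_contra h
    have := le_lowestRow (m := m) h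
    rw [← hpl, hw] at this
    exact (Fin.lt_def.mp hli).not_ge this
  · ext i j
    simp [mul_permMatrix_inv]

theorem lowestRow_mul_transvection_lt {m : Matrix (Fin n) (Fin n) F} (hm : IsUnit m.det)
    {j j' : Fin n} (hjj' : j ≠ j') (h : lowestRow m j = lowestRow m j') :
    ∃ c, lowestRow (m * transvection j j' c) j' < lowestRow m j' := by
  obtain ⟨p, hp, hpl⟩ := exists_eq_lowestRow (exists_ne_zero_of_isUnit_det hm j)
  set c := -m p j' / m p j
  have hc : c * m p j = -m p j' := div_mul_cancel₀ _ hp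
  -- rows below `p` vanish in both columns, and `c` clears row `p` of the new column `j'`
  have hvanish : ∀ q : Fin n, (p : ℕ) ≤ q → (m * transvection j j' c) q j' = 0 := by
    intro q hq
    rw [mul_transvection_apply_same]
    rcases hq.eq_or_lt with hpq | hpq
    · rw [← Fin.ext hpq, hc, add_neg_cancel]
    · have below : ∀ l, (p : ℕ) = lowestRow m l → m q l = 0 := fun l hl =>
        by_contra fun hq' => (le_lowestRow hq').not_gt (hl ▸ hpq)
      rw [below j' (hpl.trans h), below j hpl, mul_zero, add_zero]
  have hm' : IsUnit (m * transvection j j' c).det := by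
    simpa [det_transvection_of_ne _ _ hjj'] using hm
  obtain ⟨q, hq, hql⟩ := exists_eq_lowestRow (exists_ne_zero_of_isUnit_det hm' j')
  exact ⟨c, hql ▸ h ▸ hpl ▸ not_le.mp fun hpq => hq (hvanish q hpq)⟩

theorem exists_bruhat {m : Matrix (Fin n) (Fin n) F} (hm : IsUnit m.det) :
    ∃ (t : Matrix (Fin n) (Fin n) F) (w : Perm (Fin n)) (u : Matrix (Fin n) (Fin n) F),
      t.IsUpperTriangular ∧ (∀ i, t i i ≠ 0) ∧ IsUnitriangular u ∧
        m = t * w⁻¹.permMatrix F * u := by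
  induction hN : ∑ j, lowestRow m j using Nat.strong_induction_on generalizing m with
  | _ N ih =>
  by_cases hinj : Function.Injective (lowestRow m)
  · obtain ⟨t, w, ht, htd, rfl⟩ := exists_eq_upper_mul_permMatrix hm hinj
    exact ⟨t, w, 1, ht, htd, isUnitriangular_one, (mul_one _).symm⟩
  obtain ⟨j, j', hlt, heq⟩ : ∃ j j', j < j' ∧ lowestRow m j = lowestRow m j' := by
    obtain ⟨a, b, hab, hne⟩ := Function.not_injective_iff.mp hinj
    rcases hne.lt_or_gt with h | h
    exacts [⟨a, b, h, hab⟩, ⟨b, a, h, hab.symm⟩]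
  obtain ⟨c, hc⟩ := lowestRow_mul_transvection_lt hm hlt.ne heq
  have hm' : IsUnit (m * transvection j j' c).det := by
    simpa [det_transvection_of_ne _ _ hlt.ne] using hm
  have hsum : ∑ q, lowestRow (m * transvection j j' c) q < N := hN ▸ Finset.sum_lt_sum
    (fun q _ => by
      rcases eq_or_ne q j' with rfl | hq
      exacts [hc.le, (lowestRow_mul_transvection_of_ne m hq c).le])
    ⟨j', Finset.mem_univ _, hc⟩
  obtain ⟨t, w, u, ht, htd, hu, hfac⟩ := ih _ hsum hm' rfl
  refine ⟨t, w, u * transvection j j' (-c), ht, htd,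
    hu.mul (isUnitriangular_transvection hlt _), ?_⟩
  rw [← Matrix.mul_assoc, ← hfac, Matrix.mul_assoc,
    transvection_mul_transvection_same _ _ hlt.ne, add_neg_cancel, transvection_zero, mul_one]

end Bruhat

section Normalization

variable {F : Type*} [Field F] {k : ℕ}

theorem affine_one_mul_permMatrix_inv_eq_update (w : Perm (Fin (k + 1))) (y : Fin k → F)
    (i : Fin k) :
    affine 1 y * w⁻¹.permMatrix F = affine 1 (Function.update y i 0) * w⁻¹.permMatrix F *
      transvection (w.symm i.castSucc) (w.symm (Fin.last k)) (y i) := by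
  have hy : Pi.single i (y i) + Function.update y i 0 = y := by
    ext l
    rcases eq_or_ne l i with rfl | hl <;> simp [*]
  rw [Matrix.mul_assoc, ← transvection_mul_permMatrix_inv, ← affine_one_single,
    ← Matrix.mul_assoc, affine_mul_affine, one_mul, one_mulVec, hy]

theorem affine_one_mul_permMatrix_inv_eq_transvection_update (w : Perm (Fin (k + 1)))
    {y : Fin k → F} {i j : Fin k} (hij : i ≠ j) (hyj : y j ≠ 0) :
    affine 1 y * w⁻¹.permMatrix F =
      affine (transvection i j (y i / y j))
          (transvection i j (y i / y j) *ᵥ Function.update y i 0) * w⁻¹.permMatrix F *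
        transvection (w.symm i.castSucc) (w.symm j.castSucc) (-(y i / y j)) := by
  have hy : transvection i j (y i / y j) *ᵥ Function.update y i 0 = y := by
    ext l
    rcases eq_or_ne l i with rfl | hl
    · simp [transvection, add_mulVec, single_mulVec, hij.symm, div_mul_cancel₀ _ hyj]
    · simp [transvection, add_mulVec, single_mulVec, hl]
  rw [Matrix.mul_assoc, ← transvection_mul_permMatrix_inv, ← affine_transvection_zero,
    ← Matrix.mul_assoc, affine_mul_affine, transvection_mul_transvection_same _ _ hij,
    add_neg_cancel, transvection_zero, mulVec_zero, zero_add, hy]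

theorem exists_reduction_of_not_isAdmissible {w : Perm (Fin (k + 1))} {y : Fin k → F}
    (h : ¬IsAdmissible w y) :
    ∃ i, y i ≠ 0 ∧ ∃ b u, IsUnitriangular b ∧ IsUnitriangular u ∧
      affine 1 y * w⁻¹.permMatrix F =
        affine b (b *ᵥ Function.update y i 0) * w⁻¹.permMatrix F * u := by
  simp only [IsAdmissible, not_and_or, not_forall, not_lt, exists_prop] at h
  rcases h with ⟨i, hyi, hle⟩ | ⟨i, j, hyi, hyj, hij, hle⟩
  · have hlt := hle.lt_of_ne (w.symm.injective.ne (Fin.castSucc_ne_last i))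
    refine ⟨i, hyi, 1, _, isUnitriangular_one, isUnitriangular_transvection hlt (y i), ?_⟩
    rw [one_mulVec]
    exact affine_one_mul_permMatrix_inv_eq_update w y i
  · have hlt := hle.lt_of_ne (w.symm.injective.ne (Fin.castSucc_injective k |>.ne hij.ne))
    exact ⟨i, hyi, _, _, isUnitriangular_transvection hij _, isUnitriangular_transvection hlt _,
      affine_one_mul_permMatrix_inv_eq_transvection_update w hij.ne hyj⟩

theorem exists_isAdmissible (w : Perm (Fin (k + 1))) (y : Fin k → F) :
    ∃ y', IsAdmissible w y' ∧ ∃ b u, IsUnitriangular b ∧ IsUnitriangular u ∧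
      affine 1 y * w⁻¹.permMatrix F = affine b (b *ᵥ y') * w⁻¹.permMatrix F * u := by
  induction hN : (Function.support y).ncard using Nat.strong_induction_on generalizing y with
  | _ N ih =>
  by_cases hy : IsAdmissible w y
  · exact ⟨y, hy, 1, 1, isUnitriangular_one, isUnitriangular_one, by rw [one_mulVec, mul_one]⟩
  obtain ⟨i, hyi, b, u, hb, hu, hred⟩ := exists_reduction_of_not_isAdmissible hy
  have hlt : (Function.support (Function.update y i 0)).ncard < N := by
    rw [← hN, Function.support_update_zero]
    exact Set.ncard_sdiff_singleton_lt_of_mem hyi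
  obtain ⟨y', hy', b', u', hb', hu', hrec⟩ := ih _ hlt _ rfl
  refine ⟨y', hy', b * b', u' * u, hb.mul hb', hu'.mul hu, ?_⟩
  rw [hred, affine_mulVec, Matrix.mul_assoc (affine b 0), hrec]
  simp only [← Matrix.mul_assoc, affine_mul_affine, mulVec_mulVec, add_zero]

end Normalization

section Decomposition

variable {F : Type*} [Field F] {k : ℕ}

theorem exists_eq_smul_affine {t : Matrix (Fin (k + 1)) (Fin (k + 1)) F}
    (ht : t.IsUpperTriangular) (htd : ∀ i, t i i ≠ 0) :
    ∃ (z : F) (A : Matrix (Fin k) (Fin k) F) (y : Fin k → F),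
      z ≠ 0 ∧ A.IsUpperTriangular ∧ (∀ i, A i i ≠ 0) ∧
        t = z • affine A (A *ᵥ y) := by
  set z := t (Fin.last k) (Fin.last k)
  have hz : z ≠ 0 := htd _
  set A : Matrix (Fin k) (Fin k) F := z⁻¹ • t.submatrix Fin.castSucc Fin.castSucc
  set v : Fin k → F := fun i => z⁻¹ * t i.castSucc (Fin.last k)
  have hA : A.IsUpperTriangular := fun i j hij => by
    simp [A, ht (show id j.castSucc < id i.castSucc from Fin.castSucc_lt_castSucc_iff.mpr hij)]
  have hAd : ∀ i, A i i ≠ 0 := fun i => by simp [A, htd, hz]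
  have hv : A *ᵥ (A⁻¹ *ᵥ v) = v := by
    rw [mulVec_mulVec, mul_nonsing_inv _ (hA.isUnit_det fun i => (hAd i).isUnit), one_mulVec]
  refine ⟨z, A, A⁻¹ *ᵥ v, hz, hA, hAd, ?_⟩
  rw [hv]
  refine matrix_ext_castSucc_last (fun i j => ?_) (fun i => ?_) (fun j => ?_) ?_
  · simp [A, hz]
  · simp [v, hz]
  · rw [Matrix.smul_apply, affine_last_castSucc, smul_zero]
    exact ht (Fin.castSucc_lt_last j)
  · simp [z]

theorem exists_smul_affine_mul_permMatrix_mul {g : Matrix (Fin (k + 1)) (Fin (k + 1)) F}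
    (hg : IsUnit g.det) :
    ∃ w y, IsAdmissible w y ∧ ∃ (z : F) (b : Matrix (Fin k) (Fin k) F)
      (u : Matrix (Fin (k + 1)) (Fin (k + 1)) F),
      z ≠ 0 ∧ b.IsUpperTriangular ∧ (∀ i, b i i ≠ 0) ∧ IsUnitriangular u ∧
        g = z • (affine b (b *ᵥ y) * w⁻¹.permMatrix F * u) := by
  obtain ⟨t, w, u, ht, htd, hu, rfl⟩ := exists_bruhat hg
  obtain ⟨z, A, y, hz, hA, hAd, rfl⟩ := exists_eq_smul_affine ht htd
  obtain ⟨y', hy', b, u', hb, hu', hnorm⟩ := exists_isAdmissible w y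
  refine ⟨w, y', hy', z, A * b, u' * u, hz, hA.mul hb.1, fun i => ?_, hu'.mul hu, ?_⟩
  · rw [hA.mul_apply_self hb.1, hb.2, mul_one]
    exact hAd i
  · rw [Matrix.smul_mul, Matrix.smul_mul, affine_mulVec, Matrix.mul_assoc (affine A 0), hnorm]
    simp only [← Matrix.mul_assoc, affine_mul_affine, mulVec_mulVec, add_zero]

theorem smul_mul_mul_eq_mul_mul_inv {m : Type*} [Fintype m] [DecidableEq m]
    {L X X' P P' u u' : Matrix m m F} {z z' : F} (hz' : z' ≠ 0) (hL : L * X' = 1)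
    (hu : u * u⁻¹ = 1) (h : z • (X * P * u) = z' • (X' * P' * u')) :
    (z'⁻¹ * z) • (L * X) * P = P' * (u' * u⁻¹) :=
  calc (z'⁻¹ * z) • (L * X) * P = z'⁻¹ • (L * (z • (X * P * u)) * u⁻¹) := by
        simp only [Matrix.mul_smul, Matrix.smul_mul, smul_smul, Matrix.mul_assoc, hu,
          Matrix.mul_one]
    _ = z'⁻¹ • (L * (z' • (X' * P' * u')) * u⁻¹) := by rw [h]
    _ = P' * (u' * u⁻¹) := by
        simp only [Matrix.mul_smul, Matrix.smul_mul, smul_smul, inv_mul_cancel₀ hz', one_smul,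
          ← Matrix.mul_assoc, hL, Matrix.one_mul]

theorem eq_of_smul_affine_mul_permMatrix_mul_eq {w w' : Perm (Fin (k + 1))} {y y' : Fin k → F}
    (hy : IsAdmissible w y) (hy' : IsAdmissible w' y') {z z' : F} (hz' : z' ≠ 0)
    {b b' : Matrix (Fin k) (Fin k) F} (hb : b.IsUpperTriangular) (hb' : b'.IsUpperTriangular)
    (hbd' : ∀ i, b' i i ≠ 0) {u u' : Matrix (Fin (k + 1)) (Fin (k + 1)) F}
    (hu : IsUnitriangular u) (hu' : IsUnitriangular u')
    (h : z • (affine b (b *ᵥ y) * w⁻¹.permMatrix F * u) =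
      z' • (affine b' (b' *ᵥ y') * w'⁻¹.permMatrix F * u')) :
    w = w' ∧ y = y' := by
  have hdet := hb'.isUnit_det fun i => (hbd' i).isUnit
  have := b'.invertibleOfIsUnitDet hdet
  set B := b'⁻¹ * b
  have hB : B.IsUpperTriangular := (blockTriangular_inv_of_blockTriangular hb').mul hb
  have hL : affine b'⁻¹ (-y') * affine b' (b' *ᵥ y') = 1 := by
    rw [affine_mul_affine, nonsing_inv_mul _ hdet, mulVec_mulVec, nonsing_inv_mul _ hdet,
      one_mulVec, add_neg_cancel, affine_one_zero]
  have hLA : affine b'⁻¹ (-y') * affine b (b *ᵥ y) = affine B (B *ᵥ y - y') := by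
    rw [affine_mul_affine, mulVec_mulVec, sub_eq_add_neg]
  have key : (z'⁻¹ * z) • affine B (B *ᵥ y - y') * w⁻¹.permMatrix F =
      w'⁻¹.permMatrix F * (u' * u⁻¹) :=
    hLA ▸ smul_mul_mul_eq_mul_mul_inv hz' hL hu.mul_inv h
  set τ := (z'⁻¹ * z) • affine B (B *ᵥ y - y')
  have hτ : τ.IsUpperTriangular := fun i j hij => by
    simp [τ, isUpperTriangular_affine _ _ hB hij]
  have hv : IsUnitriangular (τ.submatrix w' w) :=
    submatrix_eq_of_mul_permMatrix_inv_eq key ▸ hu'.mul hu.inv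
  obtain rfl := perm_eq_of_isUnitriangular_submatrix hτ hv
  have hdiag : ∀ i, τ i i = 1 := fun i => by simpa using hv.2 (w'.symm i)
  have hzero : ∀ i j, w'.symm j < w'.symm i → τ i j = 0 := fun i j hij => by
    simpa using hv.1 hij
  have hζ : z'⁻¹ * z = 1 := by simpa [τ] using hdiag (Fin.last k)
  simp only [τ, hζ, one_smul] at hdiag hzero
  exact ⟨rfl, eq_of_isAdmissible hy hy' hB (fun i => by simpa using hdiag i.castSucc)
    (fun i l hil => by simpa using hzero _ _ hil)
    (fun i hi => sub_eq_zero.mp (by simpa using hzero _ _ hi))⟩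

theorem reindex_fromBlocks_mul_reindex_fromBlocks_mul_of (b : Matrix (Fin k) (Fin k) F)
    (y : Fin k → F) (w : Perm (Fin (k + 1))) :
    reindex finSumFinEquiv finSumFinEquiv (fromBlocks b 0 0 (1 : Matrix (Fin 1) (Fin 1) F)) *
        reindex finSumFinEquiv finSumFinEquiv
          (fromBlocks 1 (of fun i (_ : Fin 1) => y i) 0 (1 : Matrix (Fin 1) (Fin 1) F)) *
        (of fun i j : Fin (k + 1) => if i = w j then (1 : F) else 0) =
      affine b (b *ᵥ y) * w⁻¹.permMatrix F := by
  rw [affine_mulVec]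
  congr 1
  ext i j
  simp [PEquiv.toMatrix_apply, Equiv.eq_symm_apply, eq_comm]

end Decomposition

end MirabolicBruhat

theorem stmt11_general (F : Type*) [Field F] (k : ℕ)
    (g : Matrix (Fin (k + 1)) (Fin (k + 1)) F) (hg : IsUnit g.det) :
    ∃! p : Equiv.Perm (Fin (k + 1)) × (Fin k → F),
      ((∀ i : Fin k, p.2 i ≠ 0 →
          p.1.symm (Fin.last k) < p.1.symm (Fin.castSucc i)) ∧
       (∀ i j : Fin k, p.2 i ≠ 0 → p.2 j ≠ 0 → i < j →
          p.1.symm (Fin.castSucc j) < p.1.symm (Fin.castSucc i))) ∧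
      ∃ (z : F) (b : Matrix (Fin k) (Fin k) F)
        (u : Matrix (Fin (k + 1)) (Fin (k + 1)) F),
        z ≠ 0 ∧
        (∀ i j : Fin k, j < i → b i j = 0) ∧ (∀ i : Fin k, b i i ≠ 0) ∧
        (∀ i : Fin (k + 1), u i i = 1) ∧
        (∀ i j : Fin (k + 1), j < i → u i j = 0) ∧
        g = z •
          ((Matrix.reindex finSumFinEquiv finSumFinEquiv
              (Matrix.fromBlocks b 0 0 (1 : Matrix (Fin 1) (Fin 1) F))) *
           (Matrix.reindex finSumFinEquiv finSumFinEquiv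
              (Matrix.fromBlocks 1 (Matrix.of fun i (_ : Fin 1) => p.2 i) 0
                (1 : Matrix (Fin 1) (Fin 1) F))) *
           (Matrix.of fun i j : Fin (k + 1) => if i = p.1 j then (1 : F) else 0) *
           u) := by
  simp only [MirabolicBruhat.reindex_fromBlocks_mul_reindex_fromBlocks_mul_of]
  obtain ⟨w, y, hy, z, b, u, hz, hb, hbd, hu, hg⟩ :=
    MirabolicBruhat.exists_smul_affine_mul_permMatrix_mul hg
  refine ⟨(w, y), ⟨hy, z, b, u, hz, fun i j h => hb h, hbd, hu.2, fun i j h => hu.1 h, hg⟩,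
    ?_⟩
  rintro ⟨w', y'⟩ ⟨hy', z', b', u', -, hb', -, hu'd, hu'u, hg'⟩
  obtain ⟨rfl, rfl⟩ := MirabolicBruhat.eq_of_smul_affine_mul_permMatrix_mul_eq hy' hy hz
    (fun i j h => hb' i j h) hb hbd ⟨fun i j h => hu'u i j h, hu'd⟩ hu (hg'.symm.trans hg)
  rfl

theorem stmt11 (F : Type*) [Field F] (k : ℕ) (hk : 2 ≤ k)
    (g : Matrix (Fin (k + 1)) (Fin (k + 1)) F) (hg : IsUnit g.det) :
    ∃! p : Equiv.Perm (Fin (k + 1)) × (Fin k → F),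
      ((∀ i : Fin k, p.2 i ≠ 0 →
          p.1.symm (Fin.last k) < p.1.symm (Fin.castSucc i)) ∧
       (∀ i j : Fin k, p.2 i ≠ 0 → p.2 j ≠ 0 → i < j →
          p.1.symm (Fin.castSucc j) < p.1.symm (Fin.castSucc i))) ∧
      ∃ (z : F) (b : Matrix (Fin k) (Fin k) F)
        (u : Matrix (Fin (k + 1)) (Fin (k + 1)) F),
        z ≠ 0 ∧
        (∀ i j : Fin k, j < i → b i j = 0) ∧ (∀ i : Fin k, b i i ≠ 0) ∧
        (∀ i : Fin (k + 1), u i i = 1) ∧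
        (∀ i j : Fin (k + 1), j < i → u i j = 0) ∧
        g = z •
          ((Matrix.reindex finSumFinEquiv finSumFinEquiv
              (Matrix.fromBlocks b 0 0 (1 : Matrix (Fin 1) (Fin 1) F))) *
           (Matrix.reindex finSumFinEquiv finSumFinEquiv
              (Matrix.fromBlocks 1 (Matrix.of fun i (_ : Fin 1) => p.2 i) 0
                (1 : Matrix (Fin 1) (Fin 1) F))) *
           (Matrix.of fun i j : Fin (k + 1) => if i = p.1 j then (1 : F) else 0) *
           u) :=
  stmt11_general F k g hg
end

section
/- Let p be a prime, n ≥ 2, h ∈ GL_{n−1}(ℚ_p), u, u′ ∈ ℚ_p^{n−1}, and z ∈ ℚ_p^×. Suppose that the block matrix [[h^{−1}, h^{−1}u],[u′ᵀ, 1]] equals z·X for some X ∈ GL_n(ℤ_p), and that |det [[1_{n−1}, u],[u′ᵀ, 1]]|_p = 1. Then z ∈ ℤ_p^×, h ∈ GL_{n−1}(ℤ_p), u ∈ ℤ_p^{n−1}, and u′ ∈ ℤ_p^{n−1}. -/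
open scoped BigOperators

theorem stmt16 (p : ℕ) [Fact p.Prime] (k : ℕ) (hk : 1 ≤ k)
    (h : Matrix (Fin k) (Fin k) ℚ_[p]) (hh : IsUnit h.det)
    (u u' : Fin k → ℚ_[p]) (z : ℚ_[p]) (hz : z ≠ 0)
    (X : Matrix (Fin k ⊕ Unit) (Fin k ⊕ Unit) ℤ_[p]) (hX : IsUnit X.det)
    (heq : (Matrix.fromBlocks h⁻¹
              (Matrix.of fun i (_ : Unit) => Matrix.mulVec h⁻¹ u i)
              (Matrix.of fun (_ : Unit) j => u' j) 1
            : Matrix (Fin k ⊕ Unit) (Fin k ⊕ Unit) ℚ_[p])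
          = z • X.map (fun a => (a : ℚ_[p])))
    (hdet : ‖(Matrix.fromBlocks 1
              (Matrix.of fun i (_ : Unit) => u i)
              (Matrix.of fun (_ : Unit) j => u' j) 1
            : Matrix (Fin k ⊕ Unit) (Fin k ⊕ Unit) ℚ_[p]).det‖ = 1) :
    ‖z‖ = 1 ∧ (∀ i j, ‖h i j‖ ≤ 1) ∧ ‖h.det‖ = 1 ∧
      (∀ i, ‖u i‖ ≤ 1) ∧ (∀ i, ‖u' i‖ ≤ 1) := by
  let f : ℤ_[p] →+* ℚ_[p] := PadicInt.Coe.ringHom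
  have hfdef : ∀ a : ℤ_[p], f a = (a : ℚ_[p]) := fun a => rfl
  have key : ∀ a : ℤ_[p], ‖((a : ℚ_[p]))‖ ≤ 1 := fun a => by
    rw [← PadicInt.norm_def]; exact a.norm_le_one
  have hmapf : X.map (fun a => (a : ℚ_[p])) = X.map f := rfl
  have hXd : ‖(X.det : ℚ_[p])‖ = 1 := by
    rw [← PadicInt.norm_def]; exact PadicInt.isUnit_iff.mp hX
  have hdet0 : h.det ≠ 0 := hh.ne_zero
  have hdpos : 0 < ‖h.det‖ := norm_pos_iff.mpr hdet0
  have hapos : 0 < ‖z‖ := norm_pos_iff.mpr hz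
  -- factorization of the left matrix
  have hfactor : (Matrix.fromBlocks h⁻¹
              (Matrix.of fun i (_ : Unit) => Matrix.mulVec h⁻¹ u i)
              (Matrix.of fun (_ : Unit) j => u' j) 1
            : Matrix (Fin k ⊕ Unit) (Fin k ⊕ Unit) ℚ_[p])
      = (Matrix.fromBlocks h⁻¹ 0 0 1) *
        (Matrix.fromBlocks 1 (Matrix.of fun i (_ : Unit) => u i)
          (Matrix.of fun (_ : Unit) j => u' j) 1) := by
    rw [Matrix.fromBlocks_multiply]
    congr 1 <;> try simp
    ext i j
    simp [Matrix.mul_apply, Matrix.mulVec, dotProduct]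
  -- determinant equation
  have E1 : ‖h.det‖⁻¹ = ‖z‖ ^ (k + 1) := by
    have e := congrArg Matrix.det heq
    rw [hfactor, Matrix.det_mul, Matrix.det_fromBlocks_zero₂₁, Matrix.det_one, mul_one,
      hmapf, Matrix.det_smul, ← RingHom.mapMatrix_apply, ← RingHom.map_det,
      Matrix.det_nonsing_inv, Ring.inverse_eq_inv'] at e
    have := congrArg norm e
    rwa [norm_mul, norm_inv, hdet, mul_one, norm_mul, norm_pow, hfdef, hXd, mul_one,
      Fintype.card_sum, Fintype.card_fin, Fintype.card_unit] at this
  -- corner entry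
  have E2 : (1 : ℚ_[p]) = z * ((X (Sum.inr ()) (Sum.inr ()) : ℤ_[p]) : ℚ_[p]) := by
    have e := congrFun (congrFun heq (Sum.inr ())) (Sum.inr ())
    simpa [Matrix.fromBlocks, Matrix.smul_apply, Matrix.map_apply] using e
  have hz_ge : 1 ≤ ‖z‖ := by
    have := congrArg norm E2
    rw [norm_one, norm_mul] at this
    calc (1:ℝ) = ‖z‖ * ‖((X (Sum.inr ()) (Sum.inr ()) : ℤ_[p]) : ℚ_[p])‖ := this
      _ ≤ ‖z‖ * 1 := by
        exact mul_le_mul_of_nonneg_left (key _) (le_of_lt hapos)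
      _ = ‖z‖ := mul_one _
  -- top-left block
  have hblock : h⁻¹ = z • (X.submatrix Sum.inl Sum.inl).map f := by
    ext i j
    have e := congrFun (congrFun heq (Sum.inl i)) (Sum.inl j)
    simpa [Matrix.fromBlocks, Matrix.smul_apply, Matrix.map_apply, Matrix.submatrix_apply,
      hfdef] using e
  have E3 : ‖h.det‖⁻¹ = ‖z‖ ^ k * ‖((X.submatrix Sum.inl Sum.inl).det : ℚ_[p])‖ := by
    have e : h⁻¹.det = z ^ k * f (X.submatrix Sum.inl Sum.inl).det := by
      rw [hblock, Matrix.det_smul, Fintype.card_fin, ← RingHom.mapMatrix_apply,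
        ← RingHom.map_det]
    have := congrArg norm e
    rwa [Matrix.det_nonsing_inv, Ring.inverse_eq_inv', norm_inv, norm_mul, norm_pow,
      hfdef] at this
  have hz_le : ‖z‖ ≤ 1 := by
    have h1 : ‖z‖ ^ k * ‖z‖ ≤ ‖z‖ ^ k * 1 := by
      rw [← pow_succ, ← E1, E3]
      exact mul_le_mul_of_nonneg_left (key _) (le_of_lt (pow_pos hapos k))
    exact le_of_mul_le_mul_left h1 (pow_pos hapos k)
  have hz1 : ‖z‖ = 1 := le_antisymm hz_le hz_ge
  have hd1 : ‖h.det‖ = 1 := by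
    have : ‖h.det‖⁻¹ = 1 := by rw [E1, hz1, one_pow]
    rwa [inv_eq_one] at this
  -- X11 is invertible over ℤ_p
  have hX11 : IsUnit (X.submatrix Sum.inl Sum.inl).det := by
    rw [PadicInt.isUnit_iff, PadicInt.norm_def]
    have := E3
    rw [hd1, hz1, one_pow, inv_one, one_mul] at this
    exact this.symm
  set Y := (X.submatrix Sum.inl Sum.inl)⁻¹ with hY
  have hXY : X.submatrix Sum.inl Sum.inl * Y = 1 := Matrix.mul_nonsing_inv _ hX11
  have hhY : h = z⁻¹ • Y.map f := by
    have hone : h⁻¹ * (z⁻¹ • Y.map f) = 1 := by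
      rw [hblock, Matrix.mul_smul, Matrix.smul_mul, smul_smul,
        ← Matrix.map_mul, hXY, Matrix.map_one f f.map_zero f.map_one,
        inv_mul_cancel₀ hz, one_smul]
    calc h = h⁻¹⁻¹ := (Matrix.nonsing_inv_nonsing_inv h hh).symm
      _ = z⁻¹ • Y.map f := Matrix.inv_eq_right_inv hone
  have hentries : ∀ i j, ‖h i j‖ ≤ 1 := by
    intro i j
    rw [hhY]
    simp only [Matrix.smul_apply, Matrix.map_apply, smul_eq_mul, norm_mul, norm_inv, hz1,
      inv_one, one_mul, hfdef]
    exact key _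
  -- u'
  have hu' : ∀ j, ‖u' j‖ ≤ 1 := by
    intro j
    have e := congrFun (congrFun heq (Sum.inr ())) (Sum.inl j)
    have e' : u' j = z * ((X (Sum.inr ()) (Sum.inl j) : ℤ_[p]) : ℚ_[p]) := by
      simpa [Matrix.fromBlocks, Matrix.smul_apply, Matrix.map_apply] using e
    rw [e', norm_mul, hz1, one_mul]
    exact key _
  -- u
  have hvec : ∀ i, Matrix.mulVec h⁻¹ u i = z * ((X (Sum.inl i) (Sum.inr ()) : ℤ_[p]) : ℚ_[p]) := by
    intro i
    have e := congrFun (congrFun heq (Sum.inl i)) (Sum.inr ())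
    simpa [Matrix.fromBlocks, Matrix.smul_apply, Matrix.map_apply] using e
  have hmul : h * h⁻¹ = 1 := Matrix.mul_nonsing_inv h hh
  have hrecover : h.mulVec (h⁻¹.mulVec u) = u := by
    rw [Matrix.mulVec_mulVec, hmul, Matrix.one_mulVec]
  have hu : ∀ i, ‖u i‖ ≤ 1 := by
    intro i
    have hvecf : Matrix.mulVec h⁻¹ u = fun i => z * ((X (Sum.inl i) (Sum.inr ()) : ℤ_[p]) : ℚ_[p]) :=
      funext hvec
    have : u i = ((Y.mulVec (fun j => X (Sum.inl j) (Sum.inr ())) i : ℤ_[p]) : ℚ_[p]) := by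
      conv_lhs => rw [← hrecover]
      rw [hvecf, hhY]
      simp only [Matrix.mulVec, dotProduct, Matrix.smul_apply, Matrix.map_apply,
        smul_eq_mul, hfdef]
      simp only [← hfdef, map_sum, map_mul]
      refine Finset.sum_congr rfl fun j _ => ?_
      field_simp
    rw [this]
    exact key _
  exact ⟨hz1, hentries, hd1, hu, hu'⟩
end

section
/- For an n-tuple of indeterminates T = (T_1,…,T_n) and m ≥ 0, define ℙ_m(T) = 𝕍(T)^{−1}·diag(T_1^m,…,T_n^m)·𝕍(T), where 𝕍(T) = (T_i^{j−1}) is the Vandermonde matrix; explicitly ℙ_m(T)_{ij} = Σ_{α=1}^n (−1)^{n−i} e_{n−i}(T̂_α) T_α^{m+j−1} / Π_{l≠α}(T_α − T_l). Then: (1) every entry ℙ_m(T)_{ij} is a symmetric polynomial in T_1,…,T_n (no denominators); (2) ℙ_m satisfies the homogeneity ℙ_m(tT)_{ij} = t^{m+j−i}·ℙ_m(T)_{ij} for all scalars t ≠ 0. -/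
/-!
By Lagrange interpolation, `Pment n m x i j` is the `i`-th coefficient of the remainder of
`X ^ (m + j)` modulo the nodal polynomial `∏ l, (X - x l)`: that remainder interpolates
`α ↦ x α ^ (m + j)` at the nodes, and the `i`-th coefficient of the Lagrange basis polynomial at
`α` is `(-1) ^ (n - 1 - i) e_{n-1-i}(x̂_α) / ∏_{l ≠ α} (x α - x l)`. Since the nodal polynomial is
monic, the same division can be carried out over `ℂ[T_1, …, T_n]` with the nodes `T_l`; the
resulting coefficients specialise to `Pment` and are symmetric because permuting the `T_l` fixes
the modulus. Homogeneity is read off the explicit formula.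
-/

open scoped BigOperators

/-- The `(i,j)`-entry of the matrix `ℙ_m(x) = 𝕍(x)⁻¹ · diag(x_α^m) · 𝕍(x)`, written via the
explicit rational expression `Σ_α (−1)^{n−i} e_{n−i}(x̂_α) x_α^{m+j−1} / Π_{l≠α}(x_α − x_l)`
(in 0-based indexing). -/
noncomputable def Pment (n m : ℕ) (x : Fin n → ℂ) (i j : Fin n) : ℂ :=
  ∑ α : Fin n, (-1 : ℂ) ^ (n - 1 - (i : ℕ)) *
    (∑ s ∈ Finset.powersetCard (n - 1 - (i : ℕ)) (Finset.univ.erase α), ∏ l ∈ s, x l) *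
    x α ^ (m + (j : ℕ)) / ∏ l ∈ Finset.univ.erase α, (x α - x l)

open Polynomial Lagrange Finset

namespace Lagrange

section CommRing

variable {R S ι : Type*} [CommRing R] [CommRing S]

theorem coeff_nodal (s : Finset ι) (v : ι → R) {k : ℕ} (hk : k ≤ #s) :
    (nodal s v).coeff k = (-1) ^ (#s - k) * ∑ t ∈ s.powersetCard (#s - k), ∏ i ∈ t, v i := by
  have hmap : (s.val.map fun i => X - C (v i)) = (s.val.map v).map fun r => X - C r := by
    rw [Multiset.map_map]; rfl
  rw [nodal, Finset.prod, hmap, Multiset.prod_X_sub_C_coeff _ (by simpa using hk),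
    Finset.esymm_map_val, Multiset.card_map]
  rfl

theorem map_nodal (f : R →+* S) (s : Finset ι) (v : ι → R) :
    (nodal s v).map f = nodal s (fun i => f (v i)) := by
  simp [nodal, Polynomial.map_prod]

theorem nodal_univ_comp_perm [Fintype ι] (v : ι → R) (σ : Equiv.Perm ι) :
    nodal univ (fun i => v (σ i)) = nodal univ v :=
  Equiv.prod_comp σ fun i => X - C (v i)

theorem map_modByMonic_nodal (f : R →+* S) (s : Finset ι) (v : ι → R) (p : R[X]) :
    (p %ₘ nodal s v).map f = p.map f %ₘ nodal s (fun i => f (v i)) := by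
  rw [map_modByMonic f nodal_monic, map_nodal]

end CommRing

section Field

variable {F ι : Type*} [Field F] [DecidableEq ι] {s : Finset ι} {v : ι → F}

theorem modByMonic_nodal_eq_interpolate (hvs : Set.InjOn v s) (p : F[X]) :
    p %ₘ nodal s v = interpolate s v (fun i => p.eval (v i)) := by
  refine eq_interpolate_of_eval_eq _ hvs ?_ fun i hi => ?_
  · rw [← degree_nodal (v := v)]
    exact degree_modByMonic_lt p nodal_monic
  · rw [modByMonic_eq_sub_mul_div, eval_sub, eval_mul, eval_nodal_at_node hi,
      zero_mul, sub_zero]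

theorem coeff_interpolate (r : ι → F) (k : ℕ) :
    (interpolate s v r).coeff k =
      ∑ i ∈ s, r i * nodalWeight s v i * (nodal (s.erase i) v).coeff k := by
  rw [interpolate_eq_nodalWeight_mul_nodal_div_X_sub_C, finsetSum_coeff]
  refine sum_congr rfl fun i hi => ?_
  rw [← nodal_erase_eq_nodal_div hi, mul_comm, ← mul_assoc, ← C_mul, coeff_C_mul]

end Field

end Lagrange

theorem Pment_eq_coeff_modByMonic_nodal {n m : ℕ} {x : Fin n → ℂ} (hx : Function.Injective x)
    (i j : Fin n) : Pment n m x i j = (X ^ (m + (j : ℕ)) %ₘ nodal univ x).coeff i := by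
  rw [modByMonic_nodal_eq_interpolate hx.injOn, coeff_interpolate, Pment]
  refine sum_congr rfl fun α _ => ?_
  have hcard : #(univ.erase α) = n - 1 := by simp [card_erase_of_mem]
  rw [coeff_nodal _ _ (by omega), hcard, nodalWeight, prod_inv_distrib, eval_pow, eval_X]
  ring

section Generic

variable (σ R : Type*) [Fintype σ] [CommRing R]

noncomputable def genericPowModNodal (k : ℕ) : (MvPolynomial σ R)[X] :=
  X ^ k %ₘ nodal univ MvPolynomial.X

variable {σ R}

theorem map_genericPowModNodal {S : Type*} [CommRing S] (f : MvPolynomial σ R →+* S) (k : ℕ) :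
    (genericPowModNodal σ R k).map f = X ^ k %ₘ nodal univ (fun i => f (MvPolynomial.X i)) := by
  rw [genericPowModNodal, map_modByMonic_nodal, Polynomial.map_pow, Polynomial.map_X]

theorem isSymmetric_coeff_genericPowModNodal (k i : ℕ) :
    ((genericPowModNodal σ R k).coeff i).IsSymmetric := by
  intro e
  rw [← AlgHom.coe_toRingHom, ← coeff_map, map_genericPowModNodal]
  simp only [AlgHom.coe_toRingHom, MvPolynomial.rename_X]
  rw [nodal_univ_comp_perm, genericPowModNodal]

theorem eval_coeff_genericPowModNodal (x : σ → R) (k i : ℕ) :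
    MvPolynomial.eval x ((genericPowModNodal σ R k).coeff i) = (X ^ k %ₘ nodal univ x).coeff i := by
  rw [← coeff_map, map_genericPowModNodal]
  simp only [MvPolynomial.eval_X]

end Generic

theorem sum_powersetCard_prod_mul_left {ι M : Type*} [CommSemiring M] (s : Finset ι) (e : ℕ)
    (t : M) (x : ι → M) :
    ∑ u ∈ s.powersetCard e, ∏ l ∈ u, t * x l = t ^ e * ∑ u ∈ s.powersetCard e, ∏ l ∈ u, x l := by
  rw [mul_sum]
  refine sum_congr rfl fun u hu => ?_
  rw [prod_mul_distrib, prod_const, (mem_powersetCard.mp hu).2]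

theorem prod_mul_sub_mul {ι M : Type*} [CommRing M] (s : Finset ι) (t a : M) (x : ι → M) :
    ∏ l ∈ s, (t * a - t * x l) = t ^ #s * ∏ l ∈ s, (a - x l) := by
  simp_rw [← mul_sub, prod_mul_distrib, prod_const]

theorem Pment_const_mul (n m : ℕ) (x : Fin n → ℂ) {t : ℂ} (ht : t ≠ 0) (i j : Fin n) :
    Pment n m (fun l => t * x l) i j
      = t ^ (((m : ℤ) + ((j : ℕ) : ℤ)) - ((i : ℕ) : ℤ)) * Pment n m x i j := by
  have hexp : t ^ (((m : ℤ) + ((j : ℕ) : ℤ)) - ((i : ℕ) : ℤ))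
      = t ^ (n - 1 - (i : ℕ)) * t ^ (m + (j : ℕ)) / t ^ (n - 1) := by
    rw [← zpow_natCast, ← zpow_natCast, ← zpow_natCast, ← zpow_add₀ ht, ← zpow_sub₀ ht]
    congr 1
    omega
  rw [Pment, Pment, hexp, mul_sum]
  refine sum_congr rfl fun α _ => ?_
  have hcard : #(univ.erase α) = n - 1 := by simp [card_erase_of_mem]
  rw [sum_powersetCard_prod_mul_left, prod_mul_sub_mul, hcard, mul_pow]
  field_simp

theorem stmt17_general (n : ℕ) (m : ℕ) :
    ∃ P : Fin n → Fin n → MvPolynomial (Fin n) ℂ,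
      (∀ i j, (P i j).IsSymmetric) ∧
      (∀ x : Fin n → ℂ, Function.Injective x → ∀ i j : Fin n,
        MvPolynomial.eval x (P i j) = Pment n m x i j) ∧
      (∀ x : Fin n → ℂ, Function.Injective x → ∀ t : ℂ, t ≠ 0 → ∀ i j : Fin n,
        Pment n m (fun l => t * x l) i j
          = t ^ (((m : ℤ) + ((j : ℕ) : ℤ)) - ((i : ℕ) : ℤ)) * Pment n m x i j) := by
  refine ⟨fun i j => (genericPowModNodal (Fin n) ℂ (m + j)).coeff i,
    fun i j => isSymmetric_coeff_genericPowModNodal _ _, fun x hx i j => ?_,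
    fun x _ t ht i j => Pment_const_mul n m x ht i j⟩
  rw [eval_coeff_genericPowModNodal, Pment_eq_coeff_modByMonic_nodal hx]

theorem stmt17 (n : ℕ) (hn : 1 ≤ n) (m : ℕ) :
    ∃ P : Fin n → Fin n → MvPolynomial (Fin n) ℂ,
      (∀ i j, (P i j).IsSymmetric) ∧
      (∀ x : Fin n → ℂ, Function.Injective x → ∀ i j : Fin n,
        MvPolynomial.eval x (P i j) = Pment n m x i j) ∧
      (∀ x : Fin n → ℂ, Function.Injective x → ∀ t : ℂ, t ≠ 0 → ∀ i j : Fin n,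
        Pment n m (fun l => t * x l) i j
          = t ^ (((m : ℤ) + ((j : ℕ) : ℤ)) - ((i : ℕ) : ℤ)) * Pment n m x i j) :=
  stmt17_general n m
end
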